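/- Let D be a semipositive symmetric generalized Laplacian on a compact manifold M commuting with an isometry g, and suppose tr(g*e^{-tD}) admits a small-time asymptotic expansion tr(g*e^{-tD}) ~ Σ_{k≥0} cₖ t^{k - d/2} as t → 0⁺, where d = dim M^g. Then ζ_{g,D}(s) = (1/Γ(s)) ∫₀^∞ t^{s-1} tr(g*e^{-tD'}) dt extends to a meromorphic function on ℂ with at most simple poles at s = d/2 - k for integers k ≥ 0, with residue cₖ/Γ(d/2 - k) at such a point; in particular ζ_{g,D} is holomorphic at s = 0, and if M^g = ∅ (so the expansion is O(t^N) for all N) then ζ_{g,D} is entire. -/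
import Mathlib

open Filter MeasureTheory Asymptotics Topology

namespace Stmt5Aux

open Set

noncomputable section

variable (θ : ℝ → ℂ) (d : ℕ) (c : ℕ → ℂ)

/-- remainder after subtracting `K` terms of the expansion -/
def R (K : ℕ) : ℝ → ℂ := fun t =>
  θ t - ∑ k ∈ Finset.range K, c k * ((t ^ ((k : ℝ) - (d : ℝ) / 2) : ℝ) : ℂ)

/-- holomorphic part: mellin of remainder near 0 plus mellin of tail -/
def MM (K : ℕ) (s : ℂ) : ℂ :=
  mellin ((Set.Ioc (0:ℝ) 1).indicator (R θ d c K)) s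
    + mellin ((Set.Ioi (1:ℝ)).indicator θ) s

/-- meromorphic representative valid for `re s > d/2 - K` -/
def G (K : ℕ) (s : ℂ) : ℂ :=
  (∑ j ∈ Finset.range K, c j * (s + ((j : ℂ) - (d : ℂ) / 2))⁻¹) + MM θ d c K s

/-- the zeta function -/
def zeta (s : ℂ) : ℂ :=
  if s = 0 ∧ Even d then c (d / 2)
  else (Complex.Gamma s)⁻¹ * G θ d c (d + 1 + ⌈-s.re⌉₊) s

variable {θ d c}

lemma contR (hcont : ContinuousOn θ (Set.Ioi 0)) (K : ℕ) :
    ContinuousOn (R θ d c K) (Set.Ioi 0) := by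
  refine hcont.sub ?_
  refine continuousOn_finset_sum _ fun k _ => continuousOn_const.mul ?_
  exact Complex.continuous_ofReal.comp_continuousOn
    (continuousOn_id.rpow_const fun x hx => Or.inl (ne_of_gt hx))

lemma locint_ind {g : ℝ → ℂ} (hg : ContinuousOn g (Set.Ioi 0)) {A : Set ℝ}
    (hA : MeasurableSet A) : LocallyIntegrableOn (A.indicator g) (Set.Ioi 0) := by
  intro x hx
  have hloc : LocallyIntegrableOn g (Set.Ioi 0) := hg.locallyIntegrableOn measurableSet_Ioi
  obtain ⟨s, hs, hint⟩ := hloc x hx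
  exact ⟨s, hs, hint.indicator hA⟩

lemma ind_zero_isBigO {f : ℝ → ℂ} {l : Filter ℝ} {A : Set ℝ}
    (h : ∀ᶠ t in l, t ∉ A) (g : ℝ → ℝ) : A.indicator f =O[l] g := by
  refine EventuallyEq.trans_isBigO ?_ (isBigO_zero g l)
  filter_upwards [h] with t ht
  exact Set.indicator_of_notMem ht _

lemma Ioo_mem : Set.Ioo (0:ℝ) 1 ∈ 𝓝[>] (0:ℝ) :=
  Ioo_mem_nhdsGT one_pos

lemma bigO_bot_R
    (hasymp : ∀ K : ℕ,
      (fun t : ℝ => θ t - ∑ k ∈ Finset.range K, c k * ((t ^ ((k : ℝ) - (d : ℝ) / 2) : ℝ) : ℂ))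
        =O[𝓝[>] (0 : ℝ)] fun t : ℝ => t ^ ((K : ℝ) - (d : ℝ) / 2)) (K : ℕ) :
    (Set.Ioc (0:ℝ) 1).indicator (R θ d c K)
      =O[𝓝[>] (0:ℝ)] fun t : ℝ => t ^ (-((d:ℝ)/2 - K)) := by
  have h1 : (Set.Ioc (0:ℝ) 1).indicator (R θ d c K) =ᶠ[𝓝[>] (0:ℝ)] R θ d c K := by
    filter_upwards [Ioo_mem] with t ht
    exact Set.indicator_of_mem (show t ∈ Set.Ioc (0:ℝ) 1 from ⟨ht.1, ht.2.le⟩) (R θ d c K)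
  have h2 : R θ d c K =O[𝓝[>] (0:ℝ)] fun t : ℝ => t ^ ((K:ℝ) - (d:ℝ)/2) := hasymp K
  simpa only [neg_sub] using h1.trans_isBigO h2

lemma conv_Ioc (hcont : ContinuousOn θ (Set.Ioi 0))
    (hasymp : ∀ K : ℕ,
      (fun t : ℝ => θ t - ∑ k ∈ Finset.range K, c k * ((t ^ ((k : ℝ) - (d : ℝ) / 2) : ℝ) : ℂ))
        =O[𝓝[>] (0 : ℝ)] fun t : ℝ => t ^ ((K : ℝ) - (d : ℝ) / 2))
    (K : ℕ) {s : ℂ} (hs : (d:ℝ)/2 - K < s.re) :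
    MellinConvergent ((Set.Ioc (0:ℝ) 1).indicator (R θ d c K)) s := by
  refine mellinConvergent_of_isBigO_rpow_exp one_pos
    (locint_ind (contR hcont K) measurableSet_Ioc) ?_ (bigO_bot_R hasymp K) hs
  refine ind_zero_isBigO ?_ _
  filter_upwards [eventually_gt_atTop (1:ℝ)] with t ht
  exact fun hm => absurd hm.2 (not_le.mpr ht)

lemma diff_Ioc (hcont : ContinuousOn θ (Set.Ioi 0))
    (hasymp : ∀ K : ℕ,
      (fun t : ℝ => θ t - ∑ k ∈ Finset.range K, c k * ((t ^ ((k : ℝ) - (d : ℝ) / 2) : ℝ) : ℂ))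
        =O[𝓝[>] (0 : ℝ)] fun t : ℝ => t ^ ((K : ℝ) - (d : ℝ) / 2))
    (K : ℕ) {s : ℂ} (hs : (d:ℝ)/2 - K < s.re) :
    DifferentiableAt ℂ (mellin ((Set.Ioc (0:ℝ) 1).indicator (R θ d c K))) s := by
  refine mellin_differentiableAt_of_isBigO_rpow_exp one_pos
    (locint_ind (contR hcont K) measurableSet_Ioc) ?_ (bigO_bot_R hasymp K) hs
  refine ind_zero_isBigO ?_ _
  filter_upwards [eventually_gt_atTop (1:ℝ)] with t ht
  exact fun hm => absurd hm.2 (not_le.mpr ht)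

lemma top_Ioi1 {ε : ℝ} (hO : θ =O[atTop] fun t => Real.exp (-ε * t)) :
    (Set.Ioi (1:ℝ)).indicator θ =O[atTop] fun t => Real.exp (-ε * t) := by
  refine EventuallyEq.trans_isBigO ?_ hO
  filter_upwards [eventually_gt_atTop (1:ℝ)] with t ht
  exact Set.indicator_of_mem ht _

lemma bot_Ioi1 (b : ℝ) :
    (Set.Ioi (1:ℝ)).indicator θ =O[𝓝[>] (0:ℝ)] fun t : ℝ => t ^ (-b) := by
  refine ind_zero_isBigO ?_ _
  filter_upwards [Ioo_mem] with t ht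
  exact fun hm => absurd ht.2 (not_lt.mpr (le_of_lt hm))

lemma conv_Ioi1 (hcont : ContinuousOn θ (Set.Ioi 0))
    (hdecay : ∃ ε : ℝ, 0 < ε ∧ θ =O[atTop] fun t => Real.exp (-ε * t)) (s : ℂ) :
    MellinConvergent ((Set.Ioi (1:ℝ)).indicator θ) s := by
  obtain ⟨ε, hε, hO⟩ := hdecay
  refine mellinConvergent_of_isBigO_rpow_exp hε
    (locint_ind hcont measurableSet_Ioi) (top_Ioi1 hO)
    (bot_Ioi1 (b := s.re - 1)) (by linarith)

lemma diff_Ioi1 (hcont : ContinuousOn θ (Set.Ioi 0))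
    (hdecay : ∃ ε : ℝ, 0 < ε ∧ θ =O[atTop] fun t => Real.exp (-ε * t)) (s : ℂ) :
    DifferentiableAt ℂ (mellin ((Set.Ioi (1:ℝ)).indicator θ)) s := by
  obtain ⟨ε, hε, hO⟩ := hdecay
  refine mellin_differentiableAt_of_isBigO_rpow_exp hε
    (locint_ind hcont measurableSet_Ioi) (top_Ioi1 hO)
    (bot_Ioi1 (b := s.re - 1)) (by linarith)

section Hyps

variable (hcont : ContinuousOn θ (Set.Ioi 0))
variable (hdecay : ∃ ε : ℝ, 0 < ε ∧ θ =O[atTop] fun t => Real.exp (-ε * t))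
variable (hasymp : ∀ K : ℕ,
      (fun t : ℝ => θ t - ∑ k ∈ Finset.range K, c k * ((t ^ ((k : ℝ) - (d : ℝ) / 2) : ℝ) : ℂ))
        =O[𝓝[>] (0 : ℝ)] fun t : ℝ => t ^ ((K : ℝ) - (d : ℝ) / 2))

lemma isOpenHalf (r : ℝ) : IsOpen {s : ℂ | r < s.re} :=
  isOpen_lt continuous_const Complex.continuous_re

include hcont hdecay hasymp in
lemma MM_diff (K : ℕ) {s : ℂ} (hs : (d:ℝ)/2 - K < s.re) :
    DifferentiableAt ℂ (MM θ d c K) s :=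
  (diff_Ioc hcont hasymp K hs).add (diff_Ioi1 hcont hdecay s)

include hcont hdecay hasymp in
lemma MM_analyticAt (K : ℕ) {s : ℂ} (hs : (d:ℝ)/2 - K < s.re) :
    AnalyticAt ℂ (MM θ d c K) s := by
  have hdo : DifferentiableOn ℂ (MM θ d c K) {s : ℂ | (d:ℝ)/2 - K < s.re} :=
    fun z hz => (MM_diff hcont hdecay hasymp K hz).differentiableWithinAt
  exact hdo.analyticAt ((isOpenHalf _).mem_nhds hs)

include hcont hasymp in
lemma mellin_R_step (K : ℕ) {s : ℂ} (hs : (d:ℝ)/2 - K < s.re) :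
    mellin ((Set.Ioc (0:ℝ) 1).indicator (R θ d c K)) s
      = c K * (s + ((K:ℂ) - (d:ℂ)/2))⁻¹
        + mellin ((Set.Ioc (0:ℝ) 1).indicator (R θ d c (K+1))) s := by
  set a : ℂ := (K:ℂ) - (d:ℂ)/2 with ha
  have hac : a = (((K:ℝ) - (d:ℝ)/2 : ℝ) : ℂ) := by rw [ha]; push_cast; ring
  have hare : a.re = (K:ℝ) - (d:ℝ)/2 := by rw [hac, Complex.ofReal_re]
  have hconv1 : MellinConvergent ((Set.Ioc (0:ℝ) 1).indicator (R θ d c (K+1))) s :=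
    conv_Ioc hcont hasymp (K+1) (by push_cast; linarith)
  have hpow := hasMellin_cpow_Ioc a (s := s) (by rw [hare]; linarith)
  have hconv2 : MellinConvergent
      (fun t : ℝ => c K • (Set.Ioc (0:ℝ) 1).indicator (fun t : ℝ => (t:ℂ) ^ a) t) s :=
    hpow.1.const_smul (c K)
  have hfun : (Set.Ioc (0:ℝ) 1).indicator (R θ d c K)
      = fun t => (Set.Ioc (0:ℝ) 1).indicator (R θ d c (K+1)) t
          + c K • (Set.Ioc (0:ℝ) 1).indicator (fun t : ℝ => (t:ℂ) ^ a) t := by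
    funext t
    by_cases ht : t ∈ Set.Ioc (0:ℝ) 1
    · simp only [Set.indicator_of_mem ht, smul_eq_mul, R, Finset.sum_range_succ]
      have hcp : ((t ^ ((K:ℝ) - (d:ℝ)/2) : ℝ) : ℂ) = (t:ℂ) ^ a := by
        rw [Complex.ofReal_cpow ht.1.le, hac]
      rw [hcp]; ring
    · simp only [Set.indicator_of_notMem ht, smul_zero, add_zero]
  rw [hfun, (hasMellin_add hconv1 hconv2).2, mellin_const_smul, hpow.2]
  rw [smul_eq_mul, one_div]
  ring

include hcont hasymp in
lemma G_succ (K : ℕ) {s : ℂ} (hs : (d:ℝ)/2 - K < s.re) :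
    G θ d c K s = G θ d c (K+1) s := by
  rw [G, G, MM, MM, mellin_R_step hcont hasymp K hs, Finset.sum_range_succ]
  ring

include hcont hasymp in
lemma G_mono (K : ℕ) {s : ℂ} (hs : (d:ℝ)/2 - K < s.re) :
    ∀ K', K ≤ K' → G θ d c K s = G θ d c K' s := by
  intro K' hKK'
  induction K', hKK' using Nat.le_induction with
  | base => rfl
  | succ m hm ih =>
      have hcast : (K:ℝ) ≤ m := Nat.cast_le.mpr hm
      rw [ih, G_succ hcont hasymp m (by linarith)]

include hcont hasymp in
lemma zeta_eq (K : ℕ) {s : ℂ} (hs : (d:ℝ)/2 - K < s.re) (hs0 : ¬(s = 0 ∧ Even d)) :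
    zeta θ d c s = (Complex.Gamma s)⁻¹ * G θ d c K s := by
  rw [zeta, if_neg hs0]
  congr 1
  have h1 : (-s.re) ≤ (⌈-s.re⌉₊ : ℝ) := Nat.le_ceil _
  have h2 : (0:ℝ) ≤ d := Nat.cast_nonneg d
  have hL : (d:ℝ)/2 - ((d + 1 + ⌈-s.re⌉₊ : ℕ) : ℝ) < s.re := by push_cast; linarith
  calc G θ d c (d + 1 + ⌈-s.re⌉₊) s
      = G θ d c (max K (d + 1 + ⌈-s.re⌉₊)) s :=
        G_mono hcont hasymp _ hL _ (le_max_right _ _)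
    _ = G θ d c K s := (G_mono hcont hasymp K hs _ (le_max_left _ _)).symm


include hcont hdecay hasymp in
lemma formula {s : ℂ} (hs : (d:ℝ)/2 < s.re) :
    zeta θ d c s = (Complex.Gamma s)⁻¹ * ∫ t in Set.Ioi (0:ℝ), (t:ℂ) ^ (s-1) * θ t := by
  have hd0 : (0:ℝ) ≤ (d:ℝ)/2 := by positivity
  have hs0 : s ≠ 0 := by
    intro h
    rw [h, Complex.zero_re] at hs
    linarith
  rw [zeta_eq hcont hasymp 0 (by simpa using hs) (fun h => hs0 h.1)]
  congr 1
  rw [G, MM, Finset.sum_range_zero, zero_add]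
  have hR0 : (Set.Ioc (0:ℝ) 1).indicator (R θ d c 0) = (Set.Ioc (0:ℝ) 1).indicator θ := by
    have : R θ d c 0 = θ := by funext t; simp [R]
    rw [this]
  have h1 : IntegrableOn (fun t : ℝ => (t:ℂ) ^ (s-1) • (Set.Ioc (0:ℝ) 1).indicator θ t)
      (Set.Ioi (0:ℝ)) := by
    have := conv_Ioc hcont hasymp 0 (s := s) (by simpa using hs)
    rw [hR0] at this
    exact this
  have h2 : IntegrableOn (fun t : ℝ => (t:ℂ) ^ (s-1) • (Set.Ioi (1:ℝ)).indicator θ t)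
      (Set.Ioi (0:ℝ)) := conv_Ioi1 hcont hdecay s
  rw [hR0, mellin, mellin, ← integral_add h1 h2]
  refine setIntegral_congr_fun measurableSet_Ioi fun t ht => ?_
  have hind : (Set.Ioc (0:ℝ) 1).indicator θ t + (Set.Ioi (1:ℝ)).indicator θ t = θ t := by
    by_cases h : t ≤ 1
    · rw [Set.indicator_of_mem (show t ∈ Set.Ioc (0:ℝ) 1 from ⟨ht, h⟩) θ,
        Set.indicator_of_notMem (show t ∉ Set.Ioi (1:ℝ) from not_lt.mpr h) θ, add_zero]
    · rw [Set.indicator_of_notMem (show t ∉ Set.Ioc (0:ℝ) 1 from fun hm => h hm.2) θ,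
        Set.indicator_of_mem (show t ∈ Set.Ioi (1:ℝ) from not_le.mp h) θ, zero_add]
  show (t:ℂ) ^ (s-1) • (Set.Ioc (0:ℝ) 1).indicator θ t
      + (t:ℂ) ^ (s-1) • (Set.Ioi (1:ℝ)).indicator θ t = (t:ℂ) ^ (s-1) * θ t
  rw [smul_eq_mul, smul_eq_mul, ← mul_add, hind]

include hcont hdecay hasymp in
lemma analyticAt_good {s₀ : ℂ} (hgood : ∀ k : ℕ, s₀ ≠ (d:ℂ)/2 - (k:ℂ)) :
    AnalyticAt ℂ (zeta θ d c) s₀ := by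
  obtain ⟨K, hK⟩ := exists_nat_gt ((d:ℝ)/2 - s₀.re)
  have hK' : (d:ℝ)/2 - K < s₀.re := by linarith
  have hG : AnalyticAt ℂ (fun s => (Complex.Gamma s)⁻¹ * G θ d c K s) s₀ := by
    refine (Complex.differentiable_one_div_Gamma.analyticAt s₀).mul (AnalyticAt.add ?_ ?_)
    · refine Finset.analyticAt_fun_sum _ fun j _ => ?_
      refine analyticAt_const.mul (AnalyticAt.inv (analyticAt_id.add analyticAt_const) ?_)
      exact fun h => hgood j (by linear_combination h)
    · exact MM_analyticAt hcont hdecay hasymp K hK'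
  refine hG.congr ?_
  have hre : ∀ᶠ s in 𝓝 s₀, (d:ℝ)/2 - K < s.re := (isOpenHalf _).eventually_mem hK'
  by_cases hd : Even d
  · obtain ⟨m, hm⟩ := hd
    have hs0 : s₀ ≠ 0 := by
      intro h
      apply hgood m
      rw [h, hm]
      push_cast
      ring
    filter_upwards [hre, eventually_ne_nhds hs0] with s h1 h2
    exact (zeta_eq hcont hasymp K h1 (fun hc' => h2 hc'.1)).symm
  · filter_upwards [hre] with s h1
    exact (zeta_eq hcont hasymp K h1 (fun hc' => hd hc'.2)).symm

include hcont hdecay hasymp in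
lemma residue (k : ℕ) :
    Tendsto (fun s : ℂ => (s - ((d:ℂ)/2 - (k:ℂ))) * zeta θ d c s)
      (𝓝[≠] ((d:ℂ)/2 - (k:ℂ)))
      (𝓝 (c k / Complex.Gamma ((d:ℂ)/2 - (k:ℂ)))) := by
  set s₀ : ℂ := (d:ℂ)/2 - (k:ℂ) with hs₀
  have hs₀c : s₀ = (((d:ℝ)/2 - k : ℝ) : ℂ) := by rw [hs₀]; push_cast; ring
  have hre0 : s₀.re = (d:ℝ)/2 - k := by rw [hs₀c, Complex.ofReal_re]
  set W : ℂ → ℂ := fun s =>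
    (∑ j ∈ (Finset.range (k+1)).erase k, c j * (s + ((j:ℂ) - (d:ℂ)/2))⁻¹)
      + MM θ d c (k+1) s with hW
  have hGsplit : ∀ s : ℂ, G θ d c (k+1) s = c k * (s - s₀)⁻¹ + W s := by
    intro s
    rw [G, ← Finset.add_sum_erase _ _ (Finset.self_mem_range_succ k), hW]
    rw [show s + ((k:ℂ) - (d:ℂ)/2) = s - s₀ from by rw [hs₀]; ring]
    ring
  have hKre : (d:ℝ)/2 - ((k+1 : ℕ):ℝ) < s₀.re := by rw [hre0]; push_cast; linarith
  have hWc : ContinuousAt W s₀ := by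
    have hsum : AnalyticAt ℂ (fun s : ℂ =>
        ∑ j ∈ (Finset.range (k+1)).erase k, c j * (s + ((j:ℂ) - (d:ℂ)/2))⁻¹) s₀ := by
      refine Finset.analyticAt_fun_sum _ fun j hj => ?_
      have hjk : j ≠ k := (Finset.mem_erase.mp hj).1
      refine analyticAt_const.mul (AnalyticAt.inv (analyticAt_id.add analyticAt_const) ?_)
      rw [show s₀ + ((j:ℂ) - (d:ℂ)/2) = (j:ℂ) - (k:ℂ) from by rw [hs₀]; ring]
      exact sub_ne_zero.mpr (by exact_mod_cast hjk)
    exact hsum.continuousAt.add (MM_diff hcont hdecay hasymp (k+1) hKre).continuousAt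
  have hH : Tendsto (fun s : ℂ => (Complex.Gamma s)⁻¹ * (c k + (s - s₀) * W s)) (𝓝 s₀)
      (𝓝 ((Complex.Gamma s₀)⁻¹ * (c k + (s₀ - s₀) * W s₀))) := by
    refine ContinuousAt.tendsto ?_
    exact (Complex.differentiable_one_div_Gamma.continuous.continuousAt).mul
      (continuousAt_const.add ((continuousAt_id.sub continuousAt_const).mul hWc))
  have hval : (Complex.Gamma s₀)⁻¹ * (c k + (s₀ - s₀) * W s₀) = c k / Complex.Gamma s₀ := by
    rw [sub_self, zero_mul, add_zero, div_eq_mul_inv, mul_comm]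
  rw [hval] at hH
  refine Tendsto.congr' ?_ (hH.mono_left nhdsWithin_le_nhds)
  have hre : ∀ᶠ s in 𝓝[≠] s₀, (d:ℝ)/2 - ((k+1:ℕ):ℝ) < s.re :=
    ((isOpenHalf _).eventually_mem hKre).filter_mono nhdsWithin_le_nhds
  have hne : ∀ᶠ s in 𝓝[≠] s₀, s ≠ s₀ := by
    filter_upwards [eventually_mem_nhdsWithin] with s hs
    exact hs
  have hz : ∀ᶠ s in 𝓝[≠] s₀, ¬(s = 0 ∧ Even d) := by
    by_cases hd : Even d
    · by_cases h0 : s₀ = 0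
      · filter_upwards [eventually_mem_nhdsWithin] with s hs
        intro hc'
        simp only [Set.mem_compl_iff, Set.mem_singleton_iff] at hs
        exact hs (by rw [hc'.1, h0])
      · filter_upwards [(eventually_ne_nhds h0).filter_mono nhdsWithin_le_nhds] with s hs
        exact fun hc' => hs hc'.1
    · exact Eventually.of_forall fun s hc' => hd hc'.2
  filter_upwards [hre, hne, hz] with s h1 h2 h3
  rw [zeta_eq hcont hasymp (k+1) h1 h3, hGsplit s]
  have hsub : s - s₀ ≠ 0 := sub_ne_zero.mpr h2
  have hkey : (s - s₀) * (c k * (s - s₀)⁻¹ + W s) = c k + (s - s₀) * W s := by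
    rw [mul_add, mul_comm (s - s₀) (c k * (s - s₀)⁻¹), mul_assoc,
      inv_mul_cancel₀ hsub, mul_one]
  rw [show (s - s₀) * ((Complex.Gamma s)⁻¹ * (c k * (s - s₀)⁻¹ + W s))
      = (Complex.Gamma s)⁻¹ * ((s - s₀) * (c k * (s - s₀)⁻¹ + W s)) from by ring, hkey]

include hcont hdecay hasymp in
lemma analyticAt_zero : AnalyticAt ℂ (zeta θ d c) 0 := by
  by_cases hgood : ∀ k : ℕ, (0:ℂ) ≠ (d:ℂ)/2 - (k:ℂ)
  · exact analyticAt_good hcont hdecay hasymp hgood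
  · push_neg at hgood
    obtain ⟨k, hk⟩ := hgood
    have hdk : (d:ℂ) = 2 * k := by linear_combination (-2 : ℂ) * hk
    have hd2 : d = 2 * k := by exact_mod_cast hdk
    have hdeven : Even d := ⟨k, by omega⟩
    have hd2' : d / 2 = k := by omega
    have hdr : (d:ℝ) = 2 * k := by exact_mod_cast hd2
    set W : ℂ → ℂ := fun s =>
      (∑ j ∈ (Finset.range (k+1)).erase k, c j * (s + ((j:ℂ) - (d:ℂ)/2))⁻¹)
        + MM θ d c (k+1) s with hW
    have hGsplit : ∀ s : ℂ, G θ d c (k+1) s = c k * s⁻¹ + W s := by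
      intro s
      rw [G, ← Finset.add_sum_erase _ _ (Finset.self_mem_range_succ k), hW]
      rw [show s + ((k:ℂ) - (d:ℂ)/2) = s from by rw [hdk]; ring]
      ring
    have hKre : (d:ℝ)/2 - ((k+1 : ℕ):ℝ) < (0:ℂ).re := by
      rw [Complex.zero_re, hdr]
      push_cast
      linarith
    have hWa : AnalyticAt ℂ W 0 := by
      refine (Finset.analyticAt_fun_sum _ fun j hj => ?_).add
        (MM_analyticAt hcont hdecay hasymp (k+1) hKre)
      have hjk : j ≠ k := (Finset.mem_erase.mp hj).1
      refine analyticAt_const.mul (AnalyticAt.inv (analyticAt_id.add analyticAt_const) ?_)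
      rw [show (0:ℂ) + ((j:ℂ) - (d:ℂ)/2) = (j:ℂ) - (k:ℂ) from by rw [hdk]; ring]
      exact sub_ne_zero.mpr (by exact_mod_cast hjk)
    have hh : AnalyticAt ℂ (fun s : ℂ => (Complex.Gamma (s+1))⁻¹ * (c k + s * W s)) 0 := by
      refine AnalyticAt.mul ?_ (analyticAt_const.add (analyticAt_id.mul hWa))
      exact (Complex.differentiable_one_div_Gamma.comp
        (differentiable_id.add_const 1)).analyticAt 0
    refine hh.congr ?_
    have hre : ∀ᶠ s in 𝓝 (0:ℂ), (d:ℝ)/2 - ((k+1:ℕ):ℝ) < s.re :=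
      (isOpenHalf _).eventually_mem hKre
    filter_upwards [hre] with s h1
    by_cases h0 : s = 0
    · rw [h0]
      rw [zeta, if_pos ⟨rfl, hdeven⟩, hd2']
      simp [Complex.Gamma_one]
    · rw [zeta_eq hcont hasymp (k+1) h1 (fun hc' => h0 hc'.1), hGsplit s]
      rw [Complex.Gamma_add_one s h0, mul_inv]
      rw [show s⁻¹ * (Complex.Gamma s)⁻¹ * (c k + s * W s)
          = (Complex.Gamma s)⁻¹ * (s⁻¹ * (c k + s * W s)) from by ring]
      congr 1
      rw [mul_add, inv_mul_cancel_left₀ h0, mul_comm (s⁻¹) (c k)]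

include hcont hdecay hasymp in
lemma entire (hc : ∀ k, c k = 0) : AnalyticOnNhd ℂ (zeta θ d c) Set.univ := by
  have hRall : ∀ K, R θ d c K = R θ d c 0 := by
    intro K
    funext t
    simp [R, hc]
  have hMK : ∀ K, MM θ d c K = MM θ d c 0 := by
    intro K
    unfold MM
    rw [hRall K, hRall 0]
  have hGM : ∀ K s, G θ d c K s = MM θ d c 0 s := by
    intro K s
    rw [G, hMK K]
    simp [hc]
  have hz : zeta θ d c = fun s => (Complex.Gamma s)⁻¹ * MM θ d c 0 s := by
    funext s
    rw [zeta]
    split_ifs with h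
    · rw [h.1, hc (d/2), Complex.Gamma_zero, inv_zero, zero_mul]
    · rw [hGM]
  rw [hz]
  intro s₀ _
  obtain ⟨K, hK⟩ := exists_nat_gt ((d:ℝ)/2 - s₀.re)
  have hK' : (d:ℝ)/2 - (K:ℝ) < s₀.re := by linarith
  have hMa := MM_analyticAt hcont hdecay hasymp K hK'
  rw [hMK K] at hMa
  exact (Complex.differentiable_one_div_Gamma.analyticAt s₀).mul hMa

end Hyps

end

end Stmt5Aux

/-- Abstract Mellin-transform form of Proposition 1.1: if
`θ(t) = tr(g* e^{-tD'})` decays exponentially at `∞` and admits a small-time asymptotic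
expansion `θ(t) ~ Σ_k c_k t^{k-d/2}` (`d = dim M^g`), then the equivariant zeta function
`ζ(s) = Γ(s)⁻¹ ∫₀^∞ t^{s-1} θ(t) dt` extends meromorphically to `ℂ` with at most simple
poles at `s = d/2 - k`, residue `c_k / Γ(d/2 - k)` there, is holomorphic at `s = 0`, and
is entire when all expansion coefficients vanish (the fixed-point-free case `M^g = ∅`). -/
theorem stmt5 (θ : ℝ → ℂ) (d : ℕ) (c : ℕ → ℂ)
    (hcont : ContinuousOn θ (Set.Ioi 0))
    (hdecay : ∃ ε : ℝ, 0 < ε ∧ θ =O[atTop] fun t => Real.exp (-ε * t))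
    (hasymp : ∀ K : ℕ,
      (fun t : ℝ => θ t - ∑ k ∈ Finset.range K, c k * ((t ^ ((k : ℝ) - (d : ℝ) / 2) : ℝ) : ℂ))
        =O[𝓝[>] (0 : ℝ)] fun t : ℝ => t ^ ((K : ℝ) - (d : ℝ) / 2)) :
    ∃ ζ : ℂ → ℂ,
      (∀ s : ℂ, (d : ℝ) / 2 < s.re →
        ζ s = (Complex.Gamma s)⁻¹ * ∫ t in Set.Ioi (0 : ℝ), (t : ℂ) ^ (s - 1) * θ t) ∧
      AnalyticOnNhd ℂ ζ {s : ℂ | ∀ k : ℕ, s ≠ (d : ℂ) / 2 - (k : ℂ)} ∧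
      (∀ k : ℕ, Tendsto (fun s : ℂ => (s - ((d : ℂ) / 2 - (k : ℂ))) * ζ s)
        (𝓝[≠] ((d : ℂ) / 2 - (k : ℂ)))
        (𝓝 (c k / Complex.Gamma ((d : ℂ) / 2 - (k : ℂ))))) ∧
      AnalyticAt ℂ ζ 0 ∧
      ((∀ k : ℕ, c k = 0) → AnalyticOnNhd ℂ ζ Set.univ) := by
  refine ⟨Stmt5Aux.zeta θ d c, ?_, ?_, ?_, ?_, ?_⟩
  · intro s hs
    exact Stmt5Aux.formula hcont hdecay hasymp hs
  · intro s hs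
    exact Stmt5Aux.analyticAt_good hcont hdecay hasymp hs
  · intro k
    exact Stmt5Aux.residue hcont hdecay hasymp k
  · exact Stmt5Aux.analyticAt_zero hcont hdecay hasymp
  · intro hc
    exact Stmt5Aux.entire hcont hdecay hasymp hc
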